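/- If (X,μ,T) is a nontrivial weak mixing measure preserving system, S is a set of rigidity for (X,μ,T), and m ∈ ℤ \ {0}, then S + m is not a set of strong recurrence for (X,μ,T). -/

import Mathlib

noncomputable section

/-- A measure preserving system: a probability space together with an invertible
measure preserving transformation. -/
structure MPSystem where
  X : Type
  [mX : MeasurableSpace X]
  μ : MeasureTheory.Measure X
  prob : MeasureTheory.IsProbabilityMeasure μ
  T : X ≃ᵐ X
  mp : MeasureTheory.MeasurePreserving T μ μ

attribute [instance] MPSystem.mX

open MeasureTheory Set Filter

/-- The `n`-th iterate of `T` (`n ∈ ℤ`), as a bijection of `X`; the image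
`𝒮.iter n '' D` is the set `T^n D`. -/
def MPSystem.iter (𝒮 : MPSystem) (n : ℤ) : 𝒮.X ≃ 𝒮.X := (𝒮.T.toEquiv) ^ n

/-- The translate `S + m` of a set of integers. -/
def zTranslate (S : Set ℤ) (m : ℤ) : Set ℤ := (fun s => s + m) '' S

/-- The system is weak mixing. -/
def IsWeakMixing (𝒮 : MPSystem) : Prop :=
  ∀ D E : Set 𝒮.X, MeasurableSet D → MeasurableSet E →
    Tendsto (fun N : ℕ =>
        (∑ n ∈ Finset.range N,
          |(𝒮.μ (D ∩ 𝒮.iter (-(n : ℤ)) '' E)).toReal - (𝒮.μ D).toReal * (𝒮.μ E).toReal|) / N)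
      atTop (nhds 0)

/-- The system is nontrivial: some measurable set has measure strictly between 0 and 1. -/
def IsNontrivialSystem (𝒮 : MPSystem) : Prop :=
  ∃ D : Set 𝒮.X, MeasurableSet D ∧ 0 < 𝒮.μ D ∧ 𝒮.μ D < 1

/-- `S` is a set of rigidity for the system `𝒮`. -/
def IsRigiditySetFor (S : Set ℤ) (𝒮 : MPSystem) : Prop :=
  S.Infinite ∧ ∀ D : Set 𝒮.X, MeasurableSet D → ∀ ε : ℝ, 0 < ε →
    {n ∈ S | ε < (𝒮.μ (symmDiff D (𝒮.iter n '' D))).toReal}.Finite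

/-- `S` is a set of strong recurrence for the system `𝒮`. -/
def IsStrongRecurrenceSetFor (S : Set ℤ) (𝒮 : MPSystem) : Prop :=
  ∀ D : Set 𝒮.X, MeasurableSet D → 0 < 𝒮.μ D →
    ∃ c : ℝ, 0 < c ∧ {n ∈ S | c < (𝒮.μ (D ∩ 𝒮.iter n '' D)).toReal}.Infinite

/-- `S` is a set of strong recurrence. -/
def IsStrongRecurrenceSet (S : Set ℤ) : Prop :=
  ∀ 𝒮 : MPSystem, IsStrongRecurrenceSetFor S 𝒮

/-- `S` is a WM set of strong recurrence. -/
def IsWMStrongRecurrenceSet (S : Set ℤ) : Prop :=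
  ∀ 𝒮 : MPSystem, IsNontrivialSystem 𝒮 → IsWeakMixing 𝒮 → IsStrongRecurrenceSetFor S 𝒮

/-!
For `m ≠ 0`, weak mixing forbids `T^m D = D` (mod null sets) for a set `D` with `0 < μ D < 1`:
otherwise `μ (D ∩ T^{-n} D) = μ D ≠ (μ D)^2` along the multiples of `m`, a set of positive density,
so the Cesàro averages in the definition of weak mixing stay bounded away from `0`.
Hence `C = D \ T^m D` has positive measure and is disjoint from `T^m C`, which gives
`μ (C ∩ T^(s+m) C) ≤ μ (T^s C \ C) ≤ μ (C ∆ T^s C)`; rigidity makes the right side small for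
all but finitely many `s ∈ S`.
-/

lemma not_tendsto_average_zero_of_le_on_multiples {f : ℕ → ℝ} (hf : ∀ n, 0 ≤ f n) {d : ℕ}
    (hd : 0 < d) {δ : ℝ} (hδ : 0 < δ) (h : ∀ k, δ ≤ f (d * k)) :
    ¬ Tendsto (fun N : ℕ => (∑ n ∈ Finset.range N, f n) / N) atTop (nhds 0) := by
  intro hlim
  have hsum (M : ℕ) : M * δ ≤ ∑ n ∈ Finset.range (d * M), f n :=
    calc M * δ ≤ ∑ k ∈ Finset.range M, f (d * k) := by
          simpa using Finset.card_nsmul_le_sum (Finset.range M) _ δ (fun k _ => h k)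
      _ = ∑ n ∈ (Finset.range M).image (d * ·), f n :=
          (Finset.sum_image fun _ _ _ _ => Nat.eq_of_mul_eq_mul_left hd).symm
      _ ≤ ∑ n ∈ Finset.range (d * M), f n := by
          refine Finset.sum_le_sum_of_subset_of_nonneg ?_ fun n _ _ => hf n
          intro n hn
          obtain ⟨k, hk, rfl⟩ := Finset.mem_image.mp hn
          exact Finset.mem_range.mpr (Nat.mul_lt_mul_of_pos_left (Finset.mem_range.mp hk) hd)
  have hmul : Tendsto (fun M : ℕ => d * (M + 1)) atTop atTop :=
    tendsto_atTop_mono (fun M => by nlinarith) (tendsto_add_atTop_nat 1)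
  refine (div_pos hδ (Nat.cast_pos.mpr hd)).not_ge (ge_of_tendsto' (hlim.comp hmul) fun M => ?_)
  simp only [Function.comp_apply]
  rw [le_div_iff₀ (by positivity)]
  calc δ / d * ((d * (M + 1) : ℕ) : ℝ) = ((M + 1 : ℕ) : ℝ) * δ := by push_cast; field_simp
    _ ≤ _ := hsum (M + 1)

namespace MPSystem

variable (𝒮 : MPSystem)

instance : IsProbabilityMeasure 𝒮.μ := 𝒮.prob

lemma measurePreserving_iter (n : ℤ) : MeasurePreserving (𝒮.iter n) 𝒮.μ 𝒮.μ := by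
  cases n with
  | ofNat n => simpa [iter, Equiv.Perm.coe_pow] using 𝒮.mp.iterate n
  | negSucc n =>
    simpa [iter, zpow_negSucc, ← inv_pow, Equiv.Perm.inv_def, Equiv.Perm.coe_pow] using
      (𝒮.mp.symm 𝒮.T).iterate (n + 1)

lemma image_iter_eq_preimage (n : ℤ) (D : Set 𝒮.X) : 𝒮.iter n '' D = 𝒮.iter (-n) ⁻¹' D := by
  rw [Equiv.image_eq_preimage_symm]
  simp [iter, zpow_neg, Equiv.Perm.inv_def]

@[simp]
lemma image_iter_zero (D : Set 𝒮.X) : 𝒮.iter 0 '' D = D := by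
  simp [iter]

lemma image_iter_add (a b : ℤ) (D : Set 𝒮.X) :
    𝒮.iter (a + b) '' D = 𝒮.iter a '' (𝒮.iter b '' D) := by
  rw [← image_comp, iter, zpow_add, Equiv.Perm.coe_mul]
  rfl

lemma measurableSet_image_iter (n : ℤ) {D : Set 𝒮.X} (hD : MeasurableSet D) :
    MeasurableSet (𝒮.iter n '' D) := by
  rw [image_iter_eq_preimage]
  exact (𝒮.measurePreserving_iter (-n)).measurable hD

lemma measure_image_iter (n : ℤ) {D : Set 𝒮.X} (hD : MeasurableSet D) :
    𝒮.μ (𝒮.iter n '' D) = 𝒮.μ D := by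
  rw [image_iter_eq_preimage]
  exact (𝒮.measurePreserving_iter (-n)).measure_preimage hD.nullMeasurableSet

lemma image_iter_ae_eq (n : ℤ) {D E : Set 𝒮.X} (h : D =ᵐ[𝒮.μ] E) :
    𝒮.iter n '' D =ᵐ[𝒮.μ] 𝒮.iter n '' E := by
  simpa only [image_iter_eq_preimage] using
    (𝒮.measurePreserving_iter (-n)).quasiMeasurePreserving.preimage_ae_eq h

def aeStabilizer (D : Set 𝒮.X) : AddSubgroup ℤ where
  carrier := {n | 𝒮.iter n '' D =ᵐ[𝒮.μ] D}
  zero_mem' := by simp only [mem_ofPred_eq, image_iter_zero]; rfl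
  add_mem' {a b} ha hb := by
    rw [mem_ofPred_eq, image_iter_add]
    exact (𝒮.image_iter_ae_eq a hb).trans ha
  neg_mem' {n} hn := by
    have h := (𝒮.image_iter_ae_eq (-n) hn).symm
    rwa [← image_iter_add, neg_add_cancel, image_iter_zero] at h

variable {𝒮}

lemma exists_disjoint_image_iter {D : Set 𝒮.X} (hD : MeasurableSet D) {m : ℤ}
    (hmD : ¬ 𝒮.iter m '' D =ᵐ[𝒮.μ] D) :
    ∃ C : Set 𝒮.X, MeasurableSet C ∧ 0 < 𝒮.μ C ∧ Disjoint C (𝒮.iter m '' C) := by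
  refine ⟨D \ 𝒮.iter m '' D, hD.diff (𝒮.measurableSet_image_iter m hD), pos_iff_ne_zero.mpr ?_,
    disjoint_sdiff_left.mono_right (image_mono sdiff_subset)⟩
  intro hnull
  exact hmD (ae_eq_of_ae_subset_of_measure_ge (ae_le_set.mpr hnull)
    (𝒮.measure_image_iter m hD).le hD.nullMeasurableSet (measure_ne_top _ _)).symm

lemma measure_inter_image_iter_add_le {C : Set 𝒮.X} (hC : MeasurableSet C) {m : ℤ}
    (hdisj : Disjoint C (𝒮.iter m '' C)) (s : ℤ) :
    𝒮.μ (C ∩ 𝒮.iter (s + m) '' C) ≤ 𝒮.μ (symmDiff C (𝒮.iter s '' C)) :=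
  calc 𝒮.μ (C ∩ 𝒮.iter (s + m) '' C)
      ≤ 𝒮.μ (𝒮.iter m '' (𝒮.iter s '' C \ C)) := by
        refine measure_mono fun x ⟨hxC, hx⟩ => ?_
        rw [image_sdiff (𝒮.iter m).injective, ← image_iter_add, add_comm]
        exact ⟨hx, hdisj.notMem_of_mem_left hxC⟩
    _ = 𝒮.μ (𝒮.iter s '' C \ C) :=
        𝒮.measure_image_iter m ((𝒮.measurableSet_image_iter s hC).diff hC)
    _ ≤ 𝒮.μ (symmDiff C (𝒮.iter s '' C)) := measure_mono subset_union_right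

end MPSystem

open MPSystem

lemma IsWeakMixing.not_image_iter_ae_eq {𝒮 : MPSystem} (hwm : IsWeakMixing 𝒮) {D : Set 𝒮.X}
    (hD : MeasurableSet D) (hD0 : 0 < 𝒮.μ D) (hD1 : 𝒮.μ D < 1) {m : ℤ} (hm : m ≠ 0) :
    ¬ 𝒮.iter m '' D =ᵐ[𝒮.μ] D := by
  intro hmD
  have hrecur (k : ℕ) : 𝒮.μ (D ∩ 𝒮.iter (-((m.natAbs * k : ℕ) : ℤ)) '' D) = 𝒮.μ D := by
    have hk : -((m.natAbs * k : ℕ) : ℤ) ∈ 𝒮.aeStabilizer D := by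
      refine AddSubgroup.zmultiples_le_of_mem hmD (Int.mem_zmultiples_iff.mpr ?_)
      rw [dvd_neg, Nat.cast_mul]
      exact (Int.dvd_natAbs.mpr dvd_rfl).mul_right _
    rw [measure_congr (EventuallyEq.rfl.inter hk), inter_self]
  set a := (𝒮.μ D).toReal
  have ha0 : 0 < a := ENNReal.toReal_pos hD0.ne' (measure_ne_top _ _)
  have ha1 : a < 1 := by simpa using ENNReal.toReal_strict_mono ENNReal.one_ne_top hD1
  refine not_tendsto_average_zero_of_le_on_multiples (fun n => abs_nonneg _)
    (Int.natAbs_pos.mpr hm) (δ := a - a * a) (by nlinarith) (fun k => ?_) (hwm D D hD hD)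
  rw [hrecur k]
  exact le_abs_self _

lemma IsRigiditySetFor.not_isStrongRecurrenceSetFor_zTranslate {𝒮 : MPSystem} {S : Set ℤ}
    (hS : IsRigiditySetFor S 𝒮) {m : ℤ} {C : Set 𝒮.X} (hC : MeasurableSet C)
    (hCpos : 0 < 𝒮.μ C) (hdisj : Disjoint C (𝒮.iter m '' C)) :
    ¬ IsStrongRecurrenceSetFor (zTranslate S m) 𝒮 := by
  intro hrec
  obtain ⟨c, hc, hinf⟩ := hrec C hC hCpos
  refine hinf (((hS.2 C hC c hc).image (· + m)).subset ?_)
  rintro _ ⟨⟨s, hs, rfl⟩, hcs⟩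
  exact ⟨s, ⟨hs, hcs.trans_le (ENNReal.toReal_mono (measure_ne_top _ _)
    (measure_inter_image_iter_add_le hC hdisj s))⟩, rfl⟩

/-- If `𝒮` is a nontrivial weak mixing system, `S` is a set of rigidity for `𝒮`, and
`m ≠ 0`, then `S + m` is not a set of strong recurrence for `𝒮`. -/
theorem statement9 (𝒮 : MPSystem) (hnt : IsNontrivialSystem 𝒮) (hwm : IsWeakMixing 𝒮)
    (S : Set ℤ) (hS : IsRigiditySetFor S 𝒮) (m : ℤ) (hm : m ≠ 0) :
    ¬ IsStrongRecurrenceSetFor (zTranslate S m) 𝒮 := by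
  obtain ⟨D, hD, hD0, hD1⟩ := hnt
  obtain ⟨C, hC, hCpos, hdisj⟩ :=
    exists_disjoint_image_iter hD (hwm.not_image_iter_ae_eq hD hD0 hD1 hm)
  exact hS.not_isStrongRecurrenceSetFor_zTranslate hC hCpos hdisj
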